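/- Characterisation used by the optimisation: if acyclic(ws ∪ rf ∪ fr ∪ po-loc) holds (uniproc) and the full relation ws ∪ rf ∪ fr ∪ po has a cycle, then it has a cycle in which, for each address, at most three accesses to that address appear, from pairwise distinct processors. -/

import Mathlib

/-!
Take a shortest cycle of `po ∪ com`. By minimality it is chordless: on its events, `po ∪ com`
is exactly the successor map `σ` of the cycle.

If `x → y` is a same-address `po` step of such a cycle, with neighbours `p → x` and `y → z`,
a case analysis on these two edges, using that `ws` totally orders the writes of an address,
produces one of the shortcuts `p → y`, `x → z`, `p → z` or a cycle of `po-loc ∪ com`. Hence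
distinct same-address events of the cycle lie on distinct processors.

Any two writes to an address are `ws`-related, hence consecutive, so there are at most two of
them; every read is entered by `rf` or left by `fr`, since two `po` edges around it would
compose to a chord. So the accesses to an address lie among three consecutive events:
`w, σ w, σ² w` if it has two writes `w, σ w`, and `σ⁻¹ w, w, σ w` if it has one write `w`.
-/
structure Evt where
  id : ℕ
  proc : ℕ
  addr : ℕ
  isWrite : Bool
deriving DecidableEq

def acyclicRel (R : Evt → Evt → Prop) : Prop :=
  Irreflexive (Relation.TransGen R)

/-- `c` is a cycle of `R`: nonempty, and each element is `R`-related to the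
next one (cyclically). -/
def IsCycle (R : Evt → Evt → Prop) (c : List Evt) : Prop :=
  c ≠ [] ∧ ∀ p ∈ c.zip (c.rotate 1), R p.1 p.2

/-- Condition (ii) of critical cycles: per address, at most three accesses,
from pairwise distinct processors. -/
def AddrCondition (c : List Evt) : Prop :=
  ∀ a : ℕ, (c.filter (fun e => e.addr = a)).length ≤ 3 ∧
    (c.filter (fun e => e.addr = a)).Pairwise (fun e e' => e.proc ≠ e'.proc)

theorem List.formPerm_symm_apply_mem {α : Type*} [DecidableEq α] {l : List α} {x : α}
    (hx : x ∈ l) : l.formPerm.symm x ∈ l :=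
  List.formPerm_mem_iff_mem.mp (by simpa using hx)

section Cycles

variable {R : Evt → Evt → Prop} {c : List Evt}

theorem isCycle_cons_iff {a : Evt} {l : List Evt} :
    IsCycle R (a :: l) ↔ List.IsChain R (a :: (l ++ [a])) := by
  rw [← List.cons_append, List.isChain_cons_append_singleton_iff_forall₂, List.forall₂_iff_zip]
  simp [IsCycle]

theorem isCycle_iff_chain : IsCycle R c ↔ c ≠ [] ∧ Cycle.Chain R c := by
  cases c with
  | nil => simp [IsCycle]
  | cons a l => simp [isCycle_cons_iff]

theorem IsCycle.isRotated {c' : List Evt} (hc : IsCycle R c) (h : c ~r c') : IsCycle R c' := by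
  rw [isCycle_iff_chain] at hc ⊢
  exact ⟨fun h' => hc.1 (List.isRotated_nil_iff.mp (h' ▸ h)), Cycle.coe_eq_coe.mpr h ▸ hc.2⟩

theorem IsCycle.exists_isRotated_cons (hc : IsCycle R c) {y : Evt} (hy : y ∈ c) :
    ∃ l, c ~r y :: l ∧ IsCycle R (y :: l) := by
  obtain ⟨s, t, rfl⟩ := List.append_of_mem hy
  have h : s ++ y :: t ~r y :: (t ++ s) := List.isRotated_append
  exact ⟨t ++ s, h, hc.isRotated h⟩

theorem IsCycle.rel_formPerm (hc : IsCycle R c) (hnd : c.Nodup) {x : Evt} (hx : x ∈ c) :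
    R x (c.formPerm x) := by
  obtain ⟨i, hi, rfl⟩ := List.getElem_of_mem hx
  have hz : i < (c.zip (c.rotate 1)).length := by simpa using hi
  have := hc.2 _ (List.getElem_mem hz)
  simpa [List.formPerm_apply_getElem _ hnd, List.getElem_rotate] using this

theorem isCycle_of_transGen {e : Evt} (h : Relation.TransGen R e e) : ∃ c, IsCycle R c := by
  obtain ⟨b, heb, hbe⟩ := Relation.TransGen.tail'_iff.mp h
  obtain ⟨l, hl, hlast⟩ := List.exists_isChain_cons_of_relationReflTransGen heb
  refine ⟨e :: l, isCycle_cons_iff.mpr ?_⟩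
  rw [← List.cons_append]
  exact hl.append (.singleton e) (by simp [List.getLast?_eq_some_getLast, hlast, hbe])

theorem IsCycle.exists_shorter_of_not_nodup (hc : IsCycle R c) (hnd : ¬ c.Nodup) :
    ∃ c', IsCycle R c' ∧ c'.length < c.length := by
  obtain ⟨y, hy⟩ : ∃ y, 1 < c.count y := by
    simpa [List.nodup_iff_count_le_one] using hnd
  have hyc : y ∈ c := List.count_pos_iff.mp (by omega)
  obtain ⟨l, hrot, hyl⟩ := hc.exists_isRotated_cons hyc
  have hmem : y ∈ l := by
    rw [hrot.perm.count_eq, List.count_cons_self] at hy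
    exact List.count_pos_iff.mp (by omega)
  obtain ⟨l₁, l₂, rfl⟩ := List.append_of_mem hmem
  refine ⟨y :: l₁, ?_, ?_⟩
  · rw [isCycle_cons_iff] at hyl ⊢
    simp only [List.append_assoc, List.cons_append] at hyl
    exact (List.isChain_cons_split.mp hyl).1
  · simp [hrot.perm.length_eq]

theorem IsCycle.exists_shorter_of_rel (hc : IsCycle R c) (hnd : c.Nodup) {x y : Evt}
    (hx : x ∈ c) (hy : y ∈ c) (hxy : R x y) (hne : y ≠ c.formPerm x) :
    ∃ c', IsCycle R c' ∧ c'.length < c.length := by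
  obtain ⟨l, hrot, hyl⟩ := hc.exists_isRotated_cons hy
  rw [List.formPerm_eq_of_isRotated hnd hrot] at hne
  rw [hrot.perm.length_eq]
  rcases List.mem_cons.mp (hrot.mem_iff.mp hx) with rfl | hxl
  · refine ⟨[x], isCycle_cons_iff.mpr (by simpa using hxy), ?_⟩
    cases l with
    | nil => simp at hne
    | cons _ _ => simp
  · obtain ⟨l₁, l₂, rfl⟩ := List.append_of_mem hxl
    refine ⟨y :: (l₁ ++ [x]), ?_, ?_⟩
    · rw [isCycle_cons_iff] at hyl ⊢
      simp only [List.append_assoc, List.cons_append, List.nil_append] at hyl ⊢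
      exact List.isChain_cons_split.mpr
        ⟨(List.isChain_cons_split.mp hyl).1, List.IsChain.cons_cons hxy (.singleton y)⟩
    · cases l₂ with
      | nil => simp [List.formPerm_cons_concat_apply_last] at hne
      | cons _ _ => simp

/-- On the events of `c`, the relation `R` is exactly the successor map of the cyclic list `c`. -/
def IsChordlessCycle (R : Evt → Evt → Prop) (c : List Evt) : Prop :=
  c.Nodup ∧ ∀ x ∈ c, ∀ y ∈ c, R x y ↔ y = c.formPerm x

theorem IsCycle.exists_isChordlessCycle (hc : IsCycle R c) :
    ∃ c', IsCycle R c' ∧ IsChordlessCycle R c' := by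
  induction hn : c.length using Nat.strong_induction_on generalizing c with
  | _ n ih =>
    have shorter : (∃ c', IsCycle R c' ∧ c'.length < c.length) →
        ∃ c', IsCycle R c' ∧ IsChordlessCycle R c' := fun ⟨c', hc', hlt⟩ =>
      ih _ (hn ▸ hlt) hc' rfl
    by_cases hnd : c.Nodup
    · by_cases hchord : ∀ x ∈ c, ∀ y ∈ c, R x y → y = c.formPerm x
      · exact ⟨c, hc, hnd, fun x hx y hy =>
          ⟨hchord x hx y hy, fun h => h ▸ hc.rel_formPerm hnd hx⟩⟩
      · push Not at hchord
        obtain ⟨x, hx, y, hy, hxy, hne⟩ := hchord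
        exact shorter (hc.exists_shorter_of_rel hnd hx hy hxy hne)
    · exact shorter (hc.exists_shorter_of_not_nodup hnd)

namespace IsChordlessCycle

variable {x y : Evt}

theorem rel_formPerm (hc : IsChordlessCycle R c) (hx : x ∈ c) : R x (c.formPerm x) :=
  (hc.2 x hx _ (List.formPerm_apply_mem_of_mem hx)).mpr rfl

theorem eq_formPerm (hc : IsChordlessCycle R c) (hx : x ∈ c) (hy : y ∈ c) (h : R x y) :
    y = c.formPerm x :=
  (hc.2 x hx y hy).mp h

theorem rel_formPerm_symm (hc : IsChordlessCycle R c) (hx : x ∈ c) :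
    R (c.formPerm.symm x) x := by
  simpa using hc.rel_formPerm (List.formPerm_symm_apply_mem hx)

end IsChordlessCycle

end Cycles

theorem acyclicRel.irrefl {R : Evt → Evt → Prop} (h : acyclicRel R) {x : Evt} (hx : R x x) :
    False :=
  h x (.single hx)

theorem acyclicRel.asymm {R : Evt → Evt → Prop} (h : acyclicRel R) {x y : Evt} (hxy : R x y)
    (hyx : R y x) : False :=
  h x (.head hxy (.single hyx))

theorem acyclicRel.not_cycle_three {R : Evt → Evt → Prop} (h : acyclicRel R) {x y z : Evt}
    (hxy : R x y) (hyz : R y z) (hzx : R z x) : False :=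
  h x (.head hxy (.head hyz (.single hzx)))

/-- `po ∪ com`, where `com = ws ∪ rf ∪ fr`. -/
def scRel (ws rf fr po : Evt → Evt → Prop) (a b : Evt) : Prop :=
  ws a b ∨ rf a b ∨ fr a b ∨ po a b

/-- `po-loc ∪ com`. -/
def uniprocRel (ws rf fr po : Evt → Evt → Prop) (a b : Evt) : Prop :=
  ws a b ∨ rf a b ∨ fr a b ∨ (po a b ∧ a.addr = b.addr)

theorem uniprocRel_of_scRel {ws rf fr po : Evt → Evt → Prop} {x y : Evt}
    (h : scRel ws rf fr po x y) (ha : x.addr = y.addr) : uniprocRel ws rf fr po x y := by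
  rcases h with h | h | h | h
  exacts [.inl h, .inr (.inl h), .inr (.inr (.inl h)), .inr (.inr (.inr ⟨h, ha⟩))]

structure IsUniprocExecution (ws rf fr po : Evt → Evt → Prop) : Prop where
  ws_wf : ∀ a b, ws a b → a.isWrite = true ∧ b.isWrite = true ∧ a.addr = b.addr
  ws_trans : ∀ a b c, ws a b → ws b c → ws a c
  ws_total : ∀ a b, a.isWrite = true → b.isWrite = true → a.addr = b.addr →
    a ≠ b → ws a b ∨ ws b a
  rf_wf : ∀ a b, rf a b → a.isWrite = true ∧ b.isWrite = false ∧ a.addr = b.addr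
  fr_iff : ∀ r w, fr r w ↔ ∃ w₀, rf w₀ r ∧ ws w₀ w
  po_trans : ∀ a b c, po a b → po b c → po a c
  uniproc : acyclicRel (uniprocRel ws rf fr po)

namespace IsUniprocExecution

variable {ws rf fr po : Evt → Evt → Prop} {p x y z r w₁ w₂ : Evt}

theorem isWrite_of_fr (hE : IsUniprocExecution ws rf fr po) (h : fr r w₁) :
    r.isWrite = false ∧ w₁.isWrite = true ∧ r.addr = w₁.addr := by
  obtain ⟨w₀, h₁, h₂⟩ := (hE.fr_iff r w₁).mp h
  obtain ⟨-, hr, hw₀r⟩ := hE.rf_wf _ _ h₁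
  obtain ⟨-, hw₁, hw₀w₁⟩ := hE.ws_wf _ _ h₂
  exact ⟨hr, hw₁, hw₀r.symm.trans hw₀w₁⟩

theorem fr_of_fr_of_ws (hE : IsUniprocExecution ws rf fr po) (h₁ : fr r w₁) (h₂ : ws w₁ w₂) :
    fr r w₂ := by
  obtain ⟨w₀, hrf₀, hws₀⟩ := (hE.fr_iff _ _).mp h₁
  exact (hE.fr_iff _ _).mpr ⟨w₀, hrf₀, hE.ws_trans _ _ _ hws₀ h₂⟩

theorem ws_of_po (hE : IsUniprocExecution ws rf fr po) (hxy : po x y) (ha : x.addr = y.addr)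
    (hx : x.isWrite = true) (hy : y.isWrite = true) : ws x y := by
  have hU : uniprocRel ws rf fr po x y := .inr (.inr (.inr ⟨hxy, ha⟩))
  have hne : x ≠ y := by rintro rfl; exact hE.uniproc.irrefl hU
  exact (hE.ws_total x y hx hy ha hne).resolve_right fun h => hE.uniproc.asymm hU (.inl h)

theorem false_of_po_of_isWrite (hE : IsUniprocExecution ws rf fr po)
    (hpx : scRel ws rf fr po p x) (hxy : po x y) (ha : x.addr = y.addr) (hy : y.isWrite = true)
    (hpy : ¬ scRel ws rf fr po p y) : False := by
  have hU : uniprocRel ws rf fr po x y := .inr (.inr (.inr ⟨hxy, ha⟩))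
  rcases hpx with h | h | h | h
  · exact hpy (.inl (hE.ws_trans _ _ _ h (hE.ws_of_po hxy ha (hE.ws_wf _ _ h).2.1 hy)))
  · obtain ⟨hp, -, hpa⟩ := hE.rf_wf _ _ h
    rcases eq_or_ne p y with rfl | hne
    · exact hE.uniproc.asymm (.inr (.inl h)) hU
    rcases hE.ws_total p y hp hy (hpa.trans ha) hne with h' | h'
    · exact hpy (.inl h')
    · exact hE.uniproc.not_cycle_three (.inl h') (.inr (.inl h)) hU
  · have hx := (hE.isWrite_of_fr h).2.1
    exact hpy (.inr (.inr (.inl (hE.fr_of_fr_of_ws h (hE.ws_of_po hxy ha hx hy)))))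
  · exact hpy (.inr (.inr (.inr (hE.po_trans _ _ _ h hxy))))

theorem false_of_po_of_fr (hE : IsUniprocExecution ws rf fr po)
    (hpx : scRel ws rf fr po p x) (hxy : po x y) (ha : x.addr = y.addr)
    (hyz : fr y z) (hpy : ¬ scRel ws rf fr po p y) (hxz : ¬ scRel ws rf fr po x z)
    (hpz : ¬ scRel ws rf fr po p z) : False := by
  have hU : uniprocRel ws rf fr po x y := .inr (.inr (.inr ⟨hxy, ha⟩))
  obtain ⟨w, hwy, hwz⟩ := (hE.fr_iff _ _).mp hyz
  obtain ⟨hw, -, hwa⟩ := hE.rf_wf _ _ hwy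
  have not_isWrite_x : x.isWrite = true → False := fun hx => by
    rcases eq_or_ne x w with rfl | hne
    · exact hxz (.inl hwz)
    rcases hE.ws_total x w hx hw (ha.trans hwa.symm) hne with h | h
    · exact hxz (.inl (hE.ws_trans _ _ _ h hwz))
    · exact hE.uniproc.asymm hU (.inr (.inr (.inl ((hE.fr_iff _ _).mpr ⟨w, hwy, h⟩))))
  rcases hpx with h | h | h | h
  · exact not_isWrite_x (hE.ws_wf _ _ h).2.1
  · obtain ⟨hp, -, hpa⟩ := hE.rf_wf _ _ h
    rcases eq_or_ne p w with rfl | hne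
    · exact hpz (.inl hwz)
    rcases hE.ws_total p w hp hw (hpa.trans (ha.trans hwa.symm)) hne with h' | h'
    · exact hxz (.inr (.inr (.inl ((hE.fr_iff _ _).mpr ⟨p, h, hE.ws_trans _ _ _ h' hwz⟩))))
    · exact hE.uniproc.not_cycle_three (.inr (.inl h)) hU
        (.inr (.inr (.inl ((hE.fr_iff _ _).mpr ⟨w, hwy, h'⟩))))
  · exact not_isWrite_x (hE.isWrite_of_fr h).2.1
  · exact hpy (.inr (.inr (.inr (hE.po_trans _ _ _ h hxy))))

theorem false_of_po_of_no_shortcut (hE : IsUniprocExecution ws rf fr po)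
    (hpx : scRel ws rf fr po p x) (hxy : po x y) (ha : x.addr = y.addr)
    (hyz : scRel ws rf fr po y z) (hpy : ¬ scRel ws rf fr po p y)
    (hxz : ¬ scRel ws rf fr po x z) (hpz : ¬ scRel ws rf fr po p z) : False := by
  rcases hyz with h | h | h | h
  · exact hE.false_of_po_of_isWrite hpx hxy ha (hE.ws_wf _ _ h).1 hpy
  · exact hE.false_of_po_of_isWrite hpx hxy ha (hE.rf_wf _ _ h).1 hpy
  · exact hE.false_of_po_of_fr hpx hxy ha h hpy hxz hpz
  · exact hxz (.inr (.inr (.inr (hE.po_trans _ _ _ hxy h))))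

end IsUniprocExecution

namespace IsChordlessCycle

variable {ws rf fr po : Evt → Evt → Prop} {c : List Evt} {x y e w w₁ w₂ : Evt}

theorem false_of_po (hc : IsChordlessCycle (scRel ws rf fr po) c)
    (hE : IsUniprocExecution ws rf fr po) (hx : x ∈ c) (hy : y ∈ c) (hxy : po x y)
    (ha : x.addr = y.addr) : False := by
  have hU : uniprocRel ws rf fr po x y := .inr (.inr (.inr ⟨hxy, ha⟩))
  have hyx : y = c.formPerm x := hc.eq_formPerm hx hy (.inr (.inr (.inr hxy)))
  have hp := List.formPerm_symm_apply_mem hx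
  have hz := List.formPerm_apply_mem_of_mem hy
  refine hE.false_of_po_of_no_shortcut (hc.rel_formPerm_symm hx) hxy ha (hc.rel_formPerm hy)
    (fun h => ?_) (fun h => ?_) (fun h => ?_)
  · obtain rfl : y = x := by simpa using hc.eq_formPerm hp hy h
    exact hE.uniproc.irrefl hU
  · obtain rfl : y = x := c.formPerm.injective (hc.eq_formPerm hx hz h)
    exact hE.uniproc.irrefl hU
  · have hzx : c.formPerm y = x := by simpa using hc.eq_formPerm hp hz h
    have hyx' := hc.rel_formPerm hy
    rw [hzx] at hyx'
    exact hE.uniproc.asymm hU (uniprocRel_of_scRel hyx' ha.symm)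

theorem pairwise_proc_ne (hc : IsChordlessCycle (scRel ws rf fr po) c)
    (hE : IsUniprocExecution ws rf fr po)
    (hpo_total : ∀ a b, a.proc = b.proc → a ≠ b → po a b ∨ po b a) (a : ℕ) :
    (c.filter (fun e => e.addr = a)).Pairwise (fun e e' => e.proc ≠ e'.proc) := by
  refine (hc.1.filter _).pairwise_of_forall_ne fun x hx y hy hne hproc => ?_
  simp only [List.mem_filter, decide_eq_true_eq] at hx hy
  rcases hpo_total x y hproc hne with h | h
  · exact hc.false_of_po hE hx.1 hy.1 h (hx.2.trans hy.2.symm)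
  · exact hc.false_of_po hE hy.1 hx.1 h (hy.2.trans hx.2.symm)

theorem eq_or_eq_of_ws (hc : IsChordlessCycle (scRel ws rf fr po) c)
    (hE : IsUniprocExecution ws rf fr po) (h₁ : w₁ ∈ c) (h₂ : w₂ ∈ c) (h₁₂ : ws w₁ w₂)
    (hw : w ∈ c) (hwW : w.isWrite = true) (hwa : w.addr = w₁.addr) : w = w₁ ∨ w = w₂ := by
  rcases eq_or_ne w w₁ with rfl | hne
  · exact .inl rfl
  rcases hE.ws_total w₁ w (hE.ws_wf _ _ h₁₂).1 hwW hwa.symm hne.symm with h | h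
  · exact .inr ((hc.eq_formPerm h₁ hw (.inl h)).trans (hc.eq_formPerm h₁ h₂ (.inl h₁₂)).symm)
  · obtain rfl : w₁ = w₂ := (hc.eq_formPerm hw h₁ (.inl h)).trans
      (hc.eq_formPerm hw h₂ (.inl (hE.ws_trans _ _ _ h h₁₂))).symm
    exact (hE.uniproc.irrefl (.inl h₁₂)).elim

theorem rf_or_fr_of_read (hc : IsChordlessCycle (scRel ws rf fr po) c)
    (hE : IsUniprocExecution ws rf fr po) (he : e ∈ c) (heR : e.isWrite = false) :
    rf (c.formPerm.symm e) e ∨ fr e (c.formPerm e) := by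
  have not_isWrite : e.isWrite = true → False := by simp [heR]
  rcases hc.rel_formPerm_symm he with h | h | h | hin
  · exact (not_isWrite (hE.ws_wf _ _ h).2.1).elim
  · exact .inl h
  · exact (not_isWrite (hE.isWrite_of_fr h).2.1).elim
  rcases hc.rel_formPerm he with h | h | h | hout
  · exact (not_isWrite (hE.ws_wf _ _ h).1).elim
  · exact (not_isWrite (hE.rf_wf _ _ h).1).elim
  · exact .inr h
  · -- a `po` path around `e` would be a chord
    have : c.formPerm e = e := by
      simpa using hc.eq_formPerm (List.formPerm_symm_apply_mem he)
        (List.formPerm_apply_mem_of_mem he) (.inr (.inr (.inr (hE.po_trans _ _ _ hin hout))))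
    rw [this] at hout
    exact (hE.uniproc.irrefl (.inr (.inr (.inr ⟨hout, rfl⟩)))).elim

theorem exists_isWrite_of_mem (hc : IsChordlessCycle (scRel ws rf fr po) c)
    (hE : IsUniprocExecution ws rf fr po) (he : e ∈ c) :
    ∃ w ∈ c, w.isWrite = true ∧ w.addr = e.addr := by
  cases heW : e.isWrite
  · rcases hc.rf_or_fr_of_read hE he heW with h | h
    · obtain ⟨hpW, -, hpa⟩ := hE.rf_wf _ _ h
      exact ⟨_, List.formPerm_symm_apply_mem he, hpW, hpa⟩
    · obtain ⟨-, hzW, hza⟩ := hE.isWrite_of_fr h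
      exact ⟨_, List.formPerm_apply_mem_of_mem he, hzW, hza.symm⟩
  · exact ⟨e, he, heW, rfl⟩

theorem mem_of_ws (hc : IsChordlessCycle (scRel ws rf fr po) c)
    (hE : IsUniprocExecution ws rf fr po) (h₁ : w₁ ∈ c) (h₂ : w₂ ∈ c) (h₁₂ : ws w₁ w₂)
    (he : e ∈ c) (hea : e.addr = w₁.addr) : e ∈ [w₁, w₂, c.formPerm w₂] := by
  have hw₂ : w₂ = c.formPerm w₁ := hc.eq_formPerm h₁ h₂ (.inl h₁₂)
  obtain ⟨hw₁W, hw₂W, -⟩ := hE.ws_wf _ _ h₁₂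
  cases heW : e.isWrite
  · rcases hc.rf_or_fr_of_read hE he heW with h | h
    · obtain ⟨hpW, -, hpa⟩ := hE.rf_wf _ _ h
      rcases hc.eq_or_eq_of_ws hE h₁ h₂ h₁₂ (List.formPerm_symm_apply_mem he) hpW
          (hpa.trans hea) with hp | hp
      · have : e = w₂ := by rw [hw₂, ← hp]; simp
        simp [this, hw₂W] at heW
      · simp [← hp]
    · obtain ⟨-, hzW, hza⟩ := hE.isWrite_of_fr h
      rcases hc.eq_or_eq_of_ws hE h₁ h₂ h₁₂ (List.formPerm_apply_mem_of_mem he) hzW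
          (hza.symm.trans hea) with hz | hz
      · obtain rfl : w₂ = w₁ := (hc.eq_formPerm he h₂
          (.inr (.inr (.inl (hE.fr_of_fr_of_ws (hz ▸ h) h₁₂))))).trans hz
        exact (hE.uniproc.irrefl (.inl h₁₂)).elim
      · obtain rfl : e = w₁ := c.formPerm.injective (hz.trans hw₂)
        simp [hw₁W] at heW
  · rcases hc.eq_or_eq_of_ws hE h₁ h₂ h₁₂ he heW hea with rfl | rfl <;> simp

theorem mem_of_unique_write (hc : IsChordlessCycle (scRel ws rf fr po) c)
    (hE : IsUniprocExecution ws rf fr po)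
    (hunique : ∀ w' ∈ c, w'.isWrite = true → w'.addr = w.addr → w' = w)
    (he : e ∈ c) (hea : e.addr = w.addr) : e ∈ [c.formPerm.symm w, w, c.formPerm w] := by
  cases heW : e.isWrite
  · rcases hc.rf_or_fr_of_read hE he heW with h | h
    · obtain ⟨hpW, -, hpa⟩ := hE.rf_wf _ _ h
      have hp := hunique _ (List.formPerm_symm_apply_mem he) hpW (hpa.trans hea)
      simp [← hp]
    · obtain ⟨-, hzW, hza⟩ := hE.isWrite_of_fr h
      have hz := hunique _ (List.formPerm_apply_mem_of_mem he) hzW (hza.symm.trans hea)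
      simp [← hz]
  · simp [hunique e he heW hea]

theorem exists_addr_subset (hc : IsChordlessCycle (scRel ws rf fr po) c)
    (hE : IsUniprocExecution ws rf fr po) (a : ℕ) :
    ∃ s : List Evt, s.length ≤ 3 ∧ ∀ e ∈ c, e.addr = a → e ∈ s := by
  by_cases hpair : ∃ w₁ ∈ c, ∃ w₂ ∈ c, w₁.addr = a ∧ ws w₁ w₂
  · obtain ⟨w₁, h₁, w₂, h₂, rfl, h₁₂⟩ := hpair
    exact ⟨_, le_rfl, fun e he hea => hc.mem_of_ws hE h₁ h₂ h₁₂ he hea⟩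
  by_cases hW : ∃ w ∈ c, w.isWrite = true ∧ w.addr = a
  · obtain ⟨w, hw, hwW, rfl⟩ := hW
    refine ⟨_, le_rfl, fun e he hea => hc.mem_of_unique_write hE
      (fun w' hw' hw'W hw'a => ?_) he hea⟩
    by_contra hne
    rcases hE.ws_total w w' hwW hw'W hw'a.symm (Ne.symm hne) with h | h
    · exact hpair ⟨w, hw, w', hw', rfl, h⟩
    · exact hpair ⟨w', hw', w, hw, hw'a, h⟩
  · refine ⟨[], by simp, fun e he hea => ?_⟩
    obtain ⟨w, hw, hwW, hwa⟩ := hc.exists_isWrite_of_mem hE he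
    exact (hW ⟨w, hw, hwW, hwa.trans hea⟩).elim

theorem length_filter_addr_le_three (hc : IsChordlessCycle (scRel ws rf fr po) c)
    (hE : IsUniprocExecution ws rf fr po) (a : ℕ) :
    (c.filter (fun e => e.addr = a)).length ≤ 3 := by
  obtain ⟨s, hs, hsub⟩ := hc.exists_addr_subset hE a
  have hsub' : c.filter (fun e => e.addr = a) ⊆ s := fun e he => by
    simp only [List.mem_filter, decide_eq_true_eq] at he
    exact hsub e he.1 he.2
  exact ((hc.1.filter _).subperm hsub').length_le.trans hs

end IsChordlessCycle

theorem critical_cycle_addr_condition_general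
    (ws rf fr po : Evt → Evt → Prop)
    -- po is a union of per-processor total orders
    (hpo_trans : ∀ a b c, po a b → po b c → po a c)
    (hpo_total : ∀ a b, a.proc = b.proc → a ≠ b → po a b ∨ po b a)
    -- ws is a per-address total order on writes
    (hws : ∀ a b, ws a b → a.isWrite = true ∧ b.isWrite = true ∧ a.addr = b.addr)
    (hws_trans : ∀ a b c, ws a b → ws b c → ws a c)
    (hws_total : ∀ a b, a.isWrite = true → b.isWrite = true → a.addr = b.addr →
      a ≠ b → ws a b ∨ ws b a)
    -- rf is functional with same-address write-read pairs
    (hrf : ∀ a b, rf a b → a.isWrite = true ∧ b.isWrite = false ∧ a.addr = b.addr)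
    -- fr derived
    (hfr : ∀ r w, fr r w ↔ ∃ w₀, rf w₀ r ∧ ws w₀ w)
    -- uniproc
    (huniproc : acyclicRel (fun a b => ws a b ∨ rf a b ∨ fr a b ∨
      (po a b ∧ a.addr = b.addr)))
    -- the full relation has a cycle
    (hcyc : ∃ e, Relation.TransGen
      (fun a b => ws a b ∨ rf a b ∨ fr a b ∨ po a b) e e) :
    ∃ c : List Evt,
      IsCycle (fun a b => ws a b ∨ rf a b ∨ fr a b ∨ po a b) c ∧
      AddrCondition c := by
  have hE : IsUniprocExecution ws rf fr po :=
    ⟨hws, hws_trans, hws_total, hrf, hfr, hpo_trans, huniproc⟩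
  obtain ⟨e, he⟩ := hcyc
  obtain ⟨c₀, hc₀⟩ := isCycle_of_transGen he
  obtain ⟨c, hc, hch⟩ := hc₀.exists_isChordlessCycle
  exact ⟨c, hc, fun a =>
    ⟨hch.length_filter_addr_le_three hE a, hch.pairwise_proc_ne hE hpo_total a⟩⟩

/-- under uniproc, any cycle of ws ∪ rf ∪ fr ∪ po can be chosen
so that for each address at most three accesses to it occur, from pairwise
distinct processors. -/
theorem critical_cycle_addr_condition
    (ws rf fr po : Evt → Evt → Prop)
    -- po is a union of per-processor total orders
    (hpo_proc : ∀ a b, po a b → a.proc = b.proc)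
    (hpo_irrefl : ∀ a, ¬ po a a)
    (hpo_trans : ∀ a b c, po a b → po b c → po a c)
    (hpo_total : ∀ a b, a.proc = b.proc → a ≠ b → po a b ∨ po b a)
    -- ws is a per-address total order on writes
    (hws : ∀ a b, ws a b → a.isWrite = true ∧ b.isWrite = true ∧ a.addr = b.addr)
    (hws_irrefl : ∀ a, ¬ ws a a)
    (hws_trans : ∀ a b c, ws a b → ws b c → ws a c)
    (hws_total : ∀ a b, a.isWrite = true → b.isWrite = true → a.addr = b.addr →
      a ≠ b → ws a b ∨ ws b a)
    -- rf is functional with same-address write-read pairs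
    (hrf : ∀ a b, rf a b → a.isWrite = true ∧ b.isWrite = false ∧ a.addr = b.addr)
    (hrf_unique : ∀ r w w', rf w r → rf w' r → w = w')
    -- fr derived
    (hfr : ∀ r w, fr r w ↔ ∃ w₀, rf w₀ r ∧ ws w₀ w)
    -- uniproc
    (huniproc : acyclicRel (fun a b => ws a b ∨ rf a b ∨ fr a b ∨
      (po a b ∧ a.addr = b.addr)))
    -- the full relation has a cycle
    (hcyc : ∃ e, Relation.TransGen
      (fun a b => ws a b ∨ rf a b ∨ fr a b ∨ po a b) e e) :
    ∃ c : List Evt,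
      IsCycle (fun a b => ws a b ∨ rf a b ∨ fr a b ∨ po a b) c ∧
      AddrCondition c :=
  critical_cycle_addr_condition_general ws rf fr po hpo_trans hpo_total hws hws_trans hws_total hrf
    hfr huniproc hcyc
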